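/- arXiv:1909.03224 — 3 statements merged into one kernel-verified Lean document; each statement's English description precedes it below -/
import Mathlib

section
/- Let T > 0, C > 0, r_0 ≥ 0. Suppose for each ε ∈ (0,1), g^{(ε)} : [-r_0, ∞) → [0, ∞) satisfies g^{(ε)}(s) = 0 for s ∈ [-r_0, 0], the function t ↦ ‖g^{(ε)}_t‖_2² is integrable on [0,T], and |g^{(ε)}(t)|² ≤ C ∫_0^t ‖g^{(ε)}_r‖_2² dr + h^{(ε)}(t) for all t ∈ [0,T], where h^{(ε)} : [0,T] → [0,∞) is measurable, sup over ε ∈ (0,1) and t ∈ [0,T] of h^{(ε)}(t) is finite, and h^{(ε)}(t) → 0 as ε ↓ 0 for each t ∈ [0,T]. Then ‖g^{(ε)}_t‖_2 → 0 as ε ↓ 0 for every t ∈ [0,T]. -/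
/-! With `ψ t = ∫₀ᵗ ‖g_r‖₂² dr`, the vanishing of `g` on `[-r₀, 0]` gives
`‖g_t‖₂² ≤ ψ t + |g t|² ≤ (C + 1) ψ t + h t`. Integrating once more,
`ψ t ≤ ∫₀ᵀ h + (C + 1) ∫₀ᵗ ψ`, so Grönwall bounds `ψ t` by `e^{(C+1)t} ∫₀ᵀ h`.
By bounded convergence `∫₀ᵀ h^{(ε)} → 0`, hence `‖g^{(ε)}_t‖₂² → 0`. -/

open MeasureTheory Filter Set

/-- Segment-norm squared: `‖f_t‖₂² = ∫_{-r₀}^0 (f(t+s))² ds + (f t)²`. -/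
noncomputable def segNormSq (r₀ : ℝ) (f : ℝ → ℝ) (t : ℝ) : ℝ :=
  (∫ s in (-r₀)..0, (f (t + s))^2) + (f t)^2

open Real Topology

theorem le_mul_exp_of_le_add_mul_integral {ψ : ℝ → ℝ} {a b T : ℝ} (hb : 0 ≤ b)
    (hψ : ContinuousOn ψ (Icc 0 T)) (hle : ∀ t ∈ Icc 0 T, ψ t ≤ a + b * ∫ s in 0..t, ψ s) :
    ∀ t ∈ Icc 0 T, ψ t ≤ a * exp (b * t) := by
  -- `Φ ≥ ψ` and `Φ' = b ψ ≤ b Φ`, so the differential Grönwall inequality applies to `Φ`.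
  set Φ : ℝ → ℝ := fun t => a + b * ∫ s in 0..t, ψ s
  have hΦ_cont : ContinuousOn Φ (Icc 0 T) :=
    continuousOn_const.add <| continuousOn_const.mul <|
      (intervalIntegral.continuousOn_primitive hψ.integrableOn_Icc).congr fun t ht =>
        intervalIntegral.integral_of_le ht.1
  have hΦ_deriv : ∀ x ∈ Ico 0 T, HasDerivWithinAt Φ (b * ψ x) (Ici x) x := by
    intro x hx
    have hcont : ContinuousOn ψ (Icc x T) := hψ.mono (Icc_subset_Icc_left hx.1)
    refine (intervalIntegral.integral_hasDerivWithinAt_right (t := Ioi x)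
      ((hψ.mono (Icc_subset_Icc_right hx.2.le)).intervalIntegrable_of_Icc hx.1)
      ⟨Ioo x T, Ioo_mem_nhdsGT hx.2, (hcont.mono Ioo_subset_Icc_self).aestronglyMeasurable
        measurableSet_Ioo⟩ ?_).const_mul b |>.const_add a
    exact (hcont x ⟨le_rfl, hx.2.le⟩).mono_of_mem_nhdsWithin (Icc_mem_nhdsGT hx.2)
  intro t ht
  have hΦ_le := le_gronwallBound_of_liminf_deriv_right_le (δ := a) (ε := 0) hΦ_cont
    (fun x hx _ hr => (hΦ_deriv x hx).liminf_right_slope_le hr) (by simp [Φ])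
    (fun x hx => by simpa using mul_le_mul_of_nonneg_left (hle x ⟨hx.1, hx.2.le⟩) hb) t ht
  rw [gronwallBound_ε0, sub_zero] at hΦ_le
  exact (hle t ht).trans hΦ_le

section segNormSq

variable {r₀ : ℝ} (f : ℝ → ℝ)

theorem integral_segment_sq_nonneg (hr₀ : 0 ≤ r₀) (t : ℝ) :
    0 ≤ ∫ s in (-r₀)..0, f (t + s) ^ 2 :=
  intervalIntegral.integral_nonneg (by linarith) fun _ _ => sq_nonneg _

theorem segNormSq_nonneg (hr₀ : 0 ≤ r₀) (t : ℝ) : 0 ≤ segNormSq r₀ f t :=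
  add_nonneg (integral_segment_sq_nonneg f hr₀ t) (sq_nonneg _)

theorem sq_le_segNormSq (hr₀ : 0 ≤ r₀) (t : ℝ) : f t ^ 2 ≤ segNormSq r₀ f t :=
  le_add_of_nonneg_left (integral_segment_sq_nonneg f hr₀ t)

variable {f}

theorem integral_segment_sq_le_integral_segNormSq (hr₀ : 0 ≤ r₀)
    (hf : ∀ s ∈ Icc (-r₀) 0, f s = 0) {t : ℝ} (ht : 0 ≤ t)
    (hint : IntegrableOn (segNormSq r₀ f) (Ioc 0 t)) :
    ∫ s in (-r₀)..0, f (t + s) ^ 2 ≤ ∫ s in 0..t, segNormSq r₀ f s := by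
  -- After the shift the window is `(t - r₀, t]`; its part in `[-r₀, 0]` contributes nothing.
  have hshift := intervalIntegral.integral_comp_add_left (fun s => f s ^ 2) t (a := -r₀) (b := 0)
  rw [hshift, add_zero, ← sub_eq_add_neg, intervalIntegral.integral_of_le (by linarith),
    intervalIntegral.integral_of_le ht, ← integral_indicator measurableSet_Ioc,
    ← integral_indicator measurableSet_Ioc]
  refine integral_mono_of_nonneg (.of_forall fun s => indicator_nonneg (fun _ _ => sq_nonneg _) s)
    ((integrable_indicator_iff measurableSet_Ioc).2 hint) (.of_forall fun s => ?_)
  by_cases hs : s ∈ Ioc (t - r₀) t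
  · rw [indicator_of_mem hs]
    rcases le_or_gt s 0 with hs0 | hs0
    · rw [hf s ⟨by linarith [hs.1], hs0⟩, zero_pow two_ne_zero]
      exact indicator_nonneg (fun u _ => segNormSq_nonneg f hr₀ u) s
    · rw [indicator_of_mem (show s ∈ Ioc 0 t from ⟨hs0, hs.2⟩)]
      exact sq_le_segNormSq f hr₀ s
  · rw [indicator_of_notMem hs]
    exact indicator_nonneg (fun u _ => segNormSq_nonneg f hr₀ u) s

theorem segNormSq_le_integral_add_sq (hr₀ : 0 ≤ r₀)
    (hf : ∀ s ∈ Icc (-r₀) 0, f s = 0) {t : ℝ} (ht : 0 ≤ t)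
    (hint : IntegrableOn (segNormSq r₀ f) (Ioc 0 t)) :
    segNormSq r₀ f t ≤ (∫ s in 0..t, segNormSq r₀ f s) + f t ^ 2 :=
  add_le_add_left (integral_segment_sq_le_integral_segNormSq hr₀ hf ht hint) _

end segNormSq

theorem segNormSq_le_of_sq_le_integral_add {r₀ C T : ℝ} {f k : ℝ → ℝ} (hr₀ : 0 ≤ r₀)
    (hC : 0 ≤ C) (hf : ∀ s ∈ Icc (-r₀) 0, f s = 0)
    (hint : IntegrableOn (segNormSq r₀ f) (Icc 0 T))
    (hk : IntegrableOn k (Icc 0 T)) (hk_nonneg : ∀ t ∈ Icc 0 T, 0 ≤ k t)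
    (hbd : ∀ t ∈ Icc 0 T, f t ^ 2 ≤ C * (∫ s in 0..t, segNormSq r₀ f s) + k t) :
    ∀ t ∈ Icc 0 T, segNormSq r₀ f t
      ≤ (C + 1) * ((∫ s in Icc 0 T, k s) * exp ((C + 1) * t)) + k t := by
  set A := ∫ s in Icc 0 T, k s
  set ψ : ℝ → ℝ := fun t => ∫ s in 0..t, segNormSq r₀ f s
  have hS_le : ∀ t ∈ Icc 0 T, segNormSq r₀ f t ≤ (C + 1) * ψ t + k t := fun t ht => by
    have := segNormSq_le_integral_add_sq hr₀ hf ht.1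
      (hint.mono_set (Ioc_subset_Icc_self.trans (Icc_subset_Icc_right ht.2)))
    linarith [hbd t ht]
  have hψ_cont : ContinuousOn ψ (Icc 0 T) :=
    (intervalIntegral.continuousOn_primitive hint).congr fun t ht =>
      intervalIntegral.integral_of_le ht.1
  have hψ_le : ∀ t ∈ Icc 0 T, ψ t ≤ A + (C + 1) * ∫ s in 0..t, ψ s := fun t ht => by
    have h0t : Icc 0 t ⊆ Icc 0 T := Icc_subset_Icc_right ht.2
    have hS_int : IntervalIntegrable (segNormSq r₀ f) volume 0 t :=
      (intervalIntegrable_iff_integrableOn_Icc_of_le ht.1).2 (hint.mono_set h0t)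
    have hψ_int : IntervalIntegrable ψ volume 0 t :=
      (hψ_cont.mono h0t).intervalIntegrable_of_Icc ht.1
    have hk_int : IntervalIntegrable k volume 0 t :=
      (intervalIntegrable_iff_integrableOn_Icc_of_le ht.1).2 (hk.mono_set h0t)
    have hk_le : ∫ s in 0..t, k s ≤ A := by
      rw [intervalIntegral.integral_of_le ht.1]
      exact setIntegral_mono_set hk (ae_restrict_of_forall_mem measurableSet_Icc hk_nonneg)
        (Ioc_subset_Icc_self.trans h0t).eventuallyLE
    calc ψ t ≤ ∫ s in 0..t, ((C + 1) * ψ s + k s) :=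
          intervalIntegral.integral_mono_on ht.1 hS_int ((hψ_int.const_mul _).add hk_int)
            fun s hs => hS_le s (h0t hs)
      _ = (C + 1) * (∫ s in 0..t, ψ s) + ∫ s in 0..t, k s := by
          rw [intervalIntegral.integral_add (hψ_int.const_mul _) hk_int,
            intervalIntegral.integral_const_mul]
      _ ≤ A + (C + 1) * ∫ s in 0..t, ψ s := by linarith
  intro t ht
  have hψ_exp := le_mul_exp_of_le_add_mul_integral (by linarith) hψ_cont hψ_le t ht
  linarith [hS_le t ht, mul_le_mul_of_nonneg_left hψ_exp (by linarith : 0 ≤ C + 1)]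

theorem stmt0_general (T C r₀ : ℝ) (hC : 0 < C) (hr₀ : 0 ≤ r₀)
    (g h : ℝ → ℝ → ℝ)
    (hg_zero : ∀ ε ∈ Set.Ioo (0:ℝ) 1, ∀ s ∈ Set.Icc (-r₀) 0, g ε s = 0)
    (hg_int : ∀ ε ∈ Set.Ioo (0:ℝ) 1,
      IntegrableOn (fun t => segNormSq r₀ (g ε) t) (Set.Icc 0 T))
    (hg_bd : ∀ ε ∈ Set.Ioo (0:ℝ) 1, ∀ t ∈ Set.Icc 0 T,
      (g ε t)^2 ≤ C * (∫ r in (0:ℝ)..t, segNormSq r₀ (g ε) r) + h ε t)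
    (hh_meas : ∀ ε ∈ Set.Ioo (0:ℝ) 1, Measurable (h ε))
    (hh_nonneg : ∀ ε ∈ Set.Ioo (0:ℝ) 1, ∀ t ∈ Set.Icc 0 T, 0 ≤ h ε t)
    (hh_sup : ∃ M : ℝ, ∀ ε ∈ Set.Ioo (0:ℝ) 1, ∀ t ∈ Set.Icc 0 T, h ε t ≤ M)
    (hh_lim : ∀ t ∈ Set.Icc 0 T,
      Tendsto (fun ε => h ε t) (nhdsWithin 0 (Set.Ioo 0 1)) (nhds 0)) :
    ∀ t ∈ Set.Icc 0 T,
      Tendsto (fun ε => Real.sqrt (segNormSq r₀ (g ε) t))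
        (nhdsWithin 0 (Set.Ioo 0 1)) (nhds 0) := by
  intro t ht
  obtain ⟨M, hM⟩ := hh_sup
  have hh_norm : ∀ ε ∈ Ioo (0:ℝ) 1, ∀ s ∈ Icc 0 T, ‖h ε s‖ ≤ M := fun ε hε s hs => by
    rw [Real.norm_of_nonneg (hh_nonneg ε hε s hs)]
    exact hM ε hε s hs
  have hh_int : ∀ ε ∈ Ioo (0:ℝ) 1, IntegrableOn (h ε) (Icc 0 T) := fun ε hε =>
    .of_bound measure_Icc_lt_top (hh_meas ε hε).aestronglyMeasurable M
      (ae_restrict_of_forall_mem measurableSet_Icc (hh_norm ε hε))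
  have hh_int_lim : Tendsto (fun ε => ∫ s in Icc 0 T, h ε s) (𝓝[Ioo 0 1] 0) (𝓝 0) := by
    simpa using tendsto_integral_filter_of_norm_le_const (μ := volume.restrict (Icc 0 T))
      (f := 0) (eventually_nhdsWithin_of_forall fun ε hε => (hh_meas ε hε).aestronglyMeasurable)
      ⟨M, eventually_nhdsWithin_of_forall fun ε hε =>
        ae_restrict_of_forall_mem measurableSet_Icc (hh_norm ε hε)⟩
      (ae_restrict_of_forall_mem measurableSet_Icc hh_lim)
  have hbound_lim : Tendsto (fun ε => (C + 1) * ((∫ s in Icc 0 T, h ε s) *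
      exp ((C + 1) * t)) + h ε t) (𝓝[Ioo 0 1] 0) (𝓝 0) := by
    simpa using ((hh_int_lim.mul_const _).const_mul (C + 1)).add (hh_lim t ht)
  have hS_lim : Tendsto (fun ε => segNormSq r₀ (g ε) t) (𝓝[Ioo 0 1] 0) (𝓝 0) :=
    squeeze_zero' (.of_forall fun ε => segNormSq_nonneg _ hr₀ t)
      (eventually_nhdsWithin_of_forall fun ε hε =>
        segNormSq_le_of_sq_le_integral_add hr₀ hC.le (hg_zero ε hε) (hg_int ε hε) (hh_int ε hε)
          (hh_nonneg ε hε) (hg_bd ε hε) t ht) hbound_lim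
  simpa using hS_lim.sqrt

theorem stmt0 (d : ℕ) (T C r₀ : ℝ) (hT : 0 < T) (hC : 0 < C) (hr₀ : 0 ≤ r₀)
    (g h : ℝ → ℝ → ℝ)
    (hg_nonneg : ∀ ε ∈ Set.Ioo (0:ℝ) 1, ∀ t, -r₀ ≤ t → 0 ≤ g ε t)
    (hg_zero : ∀ ε ∈ Set.Ioo (0:ℝ) 1, ∀ s ∈ Set.Icc (-r₀) 0, g ε s = 0)
    (hg_int : ∀ ε ∈ Set.Ioo (0:ℝ) 1,
      IntegrableOn (fun t => segNormSq r₀ (g ε) t) (Set.Icc 0 T))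
    (hg_bd : ∀ ε ∈ Set.Ioo (0:ℝ) 1, ∀ t ∈ Set.Icc 0 T,
      (g ε t)^2 ≤ C * (∫ r in (0:ℝ)..t, segNormSq r₀ (g ε) r) + h ε t)
    (hh_meas : ∀ ε ∈ Set.Ioo (0:ℝ) 1, Measurable (h ε))
    (hh_nonneg : ∀ ε ∈ Set.Ioo (0:ℝ) 1, ∀ t ∈ Set.Icc 0 T, 0 ≤ h ε t)
    (hh_sup : ∃ M : ℝ, ∀ ε ∈ Set.Ioo (0:ℝ) 1, ∀ t ∈ Set.Icc 0 T, h ε t ≤ M)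
    (hh_lim : ∀ t ∈ Set.Icc 0 T,
      Tendsto (fun ε => h ε t) (nhdsWithin 0 (Set.Ioo 0 1)) (nhds 0)) :
    ∀ t ∈ Set.Icc 0 T,
      Tendsto (fun ε => Real.sqrt (segNormSq r₀ (g ε) t))
        (nhdsWithin 0 (Set.Ioo 0 1)) (nhds 0) :=
  stmt0_general T C r₀ hC hr₀ g h hg_zero hg_int hg_bd hh_meas hh_nonneg hh_sup hh_lim
end

section
/- Let r_0 ≥ 0 and T ≥ r_0. Let x, y : [-r_0, T] → ℝ^d be (Bochner) integrable paths with x(s) = ξ(s), y(s) = η(s) for s ∈ [-r_0,0], and suppose |x(t) - y(t)|² ≤ |ξ(0) - η(0)|² Γ(t)² 1_{[0,T-r_0]}(t) for t ∈ [0,T], where Γ : [0,T-r_0] → [0,∞) satisfies Γ(s) ≤ e^{Ks}. Then ∫_0^T ‖x_t - y_t‖_2² dt ≤ r_0 ‖ξ - η‖_2² + (T+1) · ((e^{2K(T-r_0)} - 1)/(2K)) · |ξ(0) - η(0)|², with (e^{2K(T-r_0)}-1)/(2K) interpreted as T-r_0 for K=0. -/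
/-!
Write `g = |x - y|²`. For `t ∈ [0, T]` the segment `x_t - y_t` sees `g` on the window
`[t - r₀, t] ⊆ [-r₀, T]`; the window integral is at most `∫_{-r₀}^0 g + ∫_0^T g`, and at most
`∫_0^T g` once `t ≥ r₀`. Integrating over `t` gives
`∫_0^T ‖x_t - y_t‖₂² ≤ r₀ ∫_{-r₀}^0 g + (T + 1) ∫_0^T g`, and the hypothesis on `Γ` bounds
`∫_0^T g` by `|ξ(0) - η(0)|² ∫_0^{T-r₀} e^{2Ks} ds`.
-/

open MeasureTheory Set

/-- Segment-norm squared for a vector-valued path: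
`‖f_t‖₂² = ∫_{-r₀}^0 ‖f(t+s)‖² ds + ‖f t‖²`. -/
noncomputable def segNormSqV (d : ℕ) (r₀ : ℝ) (f : ℝ → EuclideanSpace ℝ (Fin d))
    (t : ℝ) : ℝ :=
  (∫ s in (-r₀)..0, ‖f (t + s)‖^2) + ‖f t‖^2

open intervalIntegral

theorem integral_exp_mul_eq_ite (c a : ℝ) :
    ∫ s in (0:ℝ)..a, Real.exp (c * s) =
      if c = 0 then a else (Real.exp (c * a) - 1) / c := by
  split_ifs with hc
  · simp [hc]
  · rw [integral_comp_mul_left Real.exp hc, integral_exp, mul_zero, Real.exp_zero,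
      smul_eq_mul, inv_mul_eq_div]

theorem segNormSqV_eq_integral_window (d : ℕ) (r : ℝ) (f : ℝ → EuclideanSpace ℝ (Fin d))
    (t : ℝ) :
    segNormSqV d r f t = (∫ u in (t - r)..t, ‖f u‖ ^ 2) + ‖f t‖ ^ 2 := by
  rw [segNormSqV, integral_comp_add_left (fun u => ‖f u‖ ^ 2) t, add_zero, ← sub_eq_add_neg]

theorem intervalIntegral_le_of_le_of_nonpos {g h : ℝ → ℝ} {a b c : ℝ} (hca : c ≤ a)
    (hab : a ≤ b) (hg : IntervalIntegrable g volume c b) (hh : IntervalIntegrable h volume c a)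
    (hgh : ∀ t ∈ Icc c a, g t ≤ h t) (hg_nonpos : ∀ t ∈ Ioc a b, g t ≤ 0) :
    ∫ t in c..b, g t ≤ ∫ t in c..a, h t := by
  have hgca : IntervalIntegrable g volume c a :=
    hg.mono_set (uIcc_subset_uIcc_left (mem_uIcc_of_le hca hab))
  have hgab : IntervalIntegrable g volume a b :=
    hg.mono_set (uIcc_subset_uIcc_right (mem_uIcc_of_le hca hab))
  have head : ∫ t in c..a, g t ≤ ∫ t in c..a, h t := integral_mono_on hca hgca hh hgh
  have tail : ∫ t in a..b, g t ≤ 0 := by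
    rw [integral_of_le hab]
    exact setIntegral_nonpos measurableSet_Ioc hg_nonpos
  rw [← integral_add_adjacent_intervals hgca hgab]
  linarith

theorem intervalIntegral_le_of_le_sq_of_le_exp {g Γ : ℝ → ℝ} {a b c K : ℝ} (ha : 0 ≤ a)
    (hab : a ≤ b) (hc : 0 ≤ c) (hg : IntervalIntegrable g volume 0 b)
    (hΓ : ∀ s ∈ Icc 0 a, 0 ≤ Γ s ∧ Γ s ≤ Real.exp (K * s))
    (hbound : ∀ t ∈ Icc 0 b, g t ≤ if t ≤ a then c * Γ t ^ 2 else 0) :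
    ∫ t in (0:ℝ)..b, g t ≤
      c * (if K = 0 then a else (Real.exp (2 * K * a) - 1) / (2 * K)) := by
  have hgrowth : ∀ t ∈ Icc 0 a, g t ≤ c * Real.exp (2 * K * t) := fun t ht => by
    obtain ⟨hΓ0, hΓle⟩ := hΓ t ht
    have hbt := hbound t ⟨ht.1, ht.2.trans hab⟩
    rw [if_pos ht.2] at hbt
    calc g t ≤ c * Γ t ^ 2 := hbt
      _ ≤ c * Real.exp (K * t) ^ 2 := by gcongr
      _ = c * Real.exp (2 * K * t) := by rw [← Real.exp_nat_mul]; ring_nf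
  have hvanish : ∀ t ∈ Ioc a b, g t ≤ 0 := fun t ht => by
    have hbt := hbound t ⟨ha.trans ht.1.le, ht.2⟩
    rwa [if_neg (not_le.2 ht.1)] at hbt
  have := intervalIntegral_le_of_le_of_nonpos ha hab hg
    ((by fun_prop : Continuous fun t => c * Real.exp (2 * K * t)).intervalIntegrable _ _)
    hgrowth hvanish
  simpa [intervalIntegral.integral_const_mul, integral_exp_mul_eq_ite] using this

section SlidingWindow

variable {g : ℝ → ℝ} {r T : ℝ}

theorem continuousOn_integral_sliding_window (hr : 0 ≤ r) (hg : IntegrableOn g (Icc (-r) T)) :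
    ContinuousOn (fun t => ∫ u in (t - r)..t, g u) (Icc 0 T) := by
  rcases lt_or_ge T 0 with hT | hT
  · simp [Icc_eq_empty_of_lt hT]
  have hrT : -r ≤ T := by linarith
  have hint : ∀ b ∈ Icc (-r) T, IntervalIntegrable g volume (-r) b := fun b hb =>
    (intervalIntegrable_iff_integrableOn_Icc_of_le hb.1).2
      (hg.mono_set (Icc_subset_Icc_right hb.2))
  have hprim : ContinuousOn (fun b => ∫ u in (-r)..b, g u) (Icc (-r) T) := by
    rw [← uIcc_of_le hrT] at hg ⊢
    exact continuousOn_primitive_interval hg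
  have hshift : MapsTo (fun t => t - r) (Icc 0 T) (Icc (-r) T) := fun t ht =>
    ⟨by linarith [ht.1], by linarith [ht.2]⟩
  refine ((hprim.mono (Icc_subset_Icc_left (by linarith))).sub
    (hprim.comp (continuousOn_id.sub continuousOn_const) hshift)).congr fun t ht => ?_
  exact (integral_interval_sub_left (hint t ⟨by linarith [ht.1], ht.2⟩) (hint _ (hshift ht))).symm

theorem integral_sliding_window_add_le (hr : 0 ≤ r) (hrT : r ≤ T)
    (hg0 : ∀ t ∈ Icc (-r) T, 0 ≤ g t) (hg : IntegrableOn g (Icc (-r) T)) :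
    ∫ t in (0:ℝ)..T, ((∫ u in (t - r)..t, g u) + g t) ≤
      r * (∫ u in (-r)..0, g u) + (T + 1) * ∫ t in (0:ℝ)..T, g t := by
  have hT : 0 ≤ T := hr.trans hrT
  have hgi : ∀ a b, -r ≤ a → a ≤ b → b ≤ T → IntervalIntegrable g volume a b :=
    fun a b ha hab hb => (intervalIntegrable_iff_integrableOn_Icc_of_le hab).2
      (hg.mono_set (Icc_subset_Icc ha hb))
  have hpos : ∀ a, -r ≤ a → 0 ≤ᵐ[volume.restrict (Ioc a T)] g := fun a ha =>
    ae_restrict_of_forall_mem measurableSet_Ioc fun t ht => hg0 t ⟨ha.trans ht.1.le, ht.2⟩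
  set W : ℝ → ℝ := fun t => ∫ u in (t - r)..t, g u
  have hWi : ∀ a b, 0 ≤ a → a ≤ b → b ≤ T → IntervalIntegrable W volume a b :=
    fun a b ha hab hb => ((continuousOn_integral_sliding_window hr hg).mono
      (Icc_subset_Icc ha hb)).intervalIntegrable_of_Icc hab
  have hearly : ∀ t ∈ Icc 0 r, W t ≤ ∫ u in (-r)..T, g u := fun t ht =>
    integral_mono_interval (by linarith [ht.1]) (by linarith) (by linarith [ht.2])
      (hpos _ le_rfl) (hgi _ _ le_rfl (by linarith) le_rfl)
  have hlate : ∀ t ∈ Icc r T, W t ≤ ∫ u in (0:ℝ)..T, g u := fun t ht =>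
    integral_mono_interval (by linarith [ht.1]) (by linarith) ht.2
      (hpos _ (by linarith)) (hgi _ _ (by linarith) hT le_rfl)
  have hWearly := integral_mono_on hr (hWi _ _ le_rfl hr hrT) intervalIntegrable_const hearly
  have hWlate := integral_mono_on hrT (hWi _ _ hr hrT le_rfl) intervalIntegrable_const hlate
  rw [intervalIntegral.integral_const, smul_eq_mul] at hWearly hWlate
  rw [integral_add (hWi _ _ le_rfl hT le_rfl) (hgi _ _ (by linarith) hT le_rfl),
    ← integral_add_adjacent_intervals (hWi _ _ le_rfl hr hrT) (hWi _ _ hr hrT le_rfl)]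
  rw [← integral_add_adjacent_intervals (hgi _ _ le_rfl (by linarith) hT)
    (hgi _ _ (by linarith) hT le_rfl)] at hWearly
  linear_combination hWearly + hWlate

end SlidingWindow

theorem stmt5 (d : ℕ) (r₀ T K : ℝ) (hr₀ : 0 ≤ r₀) (hT : r₀ ≤ T)
    (x y : ℝ → EuclideanSpace ℝ (Fin d)) (Γ : ℝ → ℝ)
    (hint : IntegrableOn (fun s => ‖x s - y s‖^2) (Set.Icc (-r₀) T))
    (hΓ : ∀ s ∈ Set.Icc (0:ℝ) (T - r₀), 0 ≤ Γ s ∧ Γ s ≤ Real.exp (K * s))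
    (hbound : ∀ t ∈ Set.Icc (0:ℝ) T,
      ‖x t - y t‖^2 ≤
        if t ≤ T - r₀ then ‖x 0 - y 0‖^2 * (Γ t)^2 else 0) :
    (∫ t in (0:ℝ)..T, segNormSqV d r₀ (fun s => x s - y s) t) ≤
      r₀ * segNormSqV d r₀ (fun s => x s - y s) 0 +
      (T + 1) * (if K = 0 then T - r₀ else
        (Real.exp (2 * K * (T - r₀)) - 1) / (2 * K)) * ‖x 0 - y 0‖^2 := by
  set g : ℝ → ℝ := fun s => ‖x s - y s‖ ^ 2
  have hg0 : ∀ t, 0 ≤ g t := fun t => by positivity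
  have hintegral := intervalIntegral_le_of_le_sq_of_le_exp (by linarith) (by linarith) (hg0 0)
    ((intervalIntegrable_iff_integrableOn_Icc_of_le (by linarith)).2
      (hint.mono_set (Icc_subset_Icc_left (by linarith)))) hΓ hbound
  have hwindow := integral_sliding_window_add_le hr₀ hT (fun t _ => hg0 t) hint
  calc ∫ t in (0:ℝ)..T, segNormSqV d r₀ (fun s => x s - y s) t
      = ∫ t in (0:ℝ)..T, ((∫ u in (t - r₀)..t, g u) + g t) := by
        simp only [segNormSqV_eq_integral_window, g]
    _ ≤ r₀ * (∫ u in (-r₀)..0, g u) + (T + 1) * ∫ t in (0:ℝ)..T, g t := hwindow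
    _ ≤ _ := by
      simp only [segNormSqV, zero_add]
      nlinarith [mul_le_mul_of_nonneg_left hintegral (by linarith : (0:ℝ) ≤ T + 1),
        mul_nonneg hr₀ (hg0 0)]
end

section
/- Let μ and ν be probability measures on a measurable space E. Then 2‖μ - ν‖_var² ≤ Ent(ν | μ), where ‖μ - ν‖_var := sup over measurable sets A of |μ(A) - ν(A)| and Ent(ν|μ) := ∫ log(dν/dμ) dν if ν ≪ μ, and +∞ otherwise. (Pinsker's inequality.) -/
/-!
With `f = dν/dμ`, the divergence is `∫ klFun f dμ` where `klFun x = x log x + 1 - x`, and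
`2 |μ A - ν A| ≤ ∫ |f - 1| dμ` because `f - 1` has mean zero. One-variable calculus gives
`3 (x - 1)² ≤ (2x + 4) klFun x` for `x ≥ 0`, so Cauchy–Schwarz with the weight
`(2f + 4) / 3`, whose `μ`-integral is `2`, yields `(∫ |f - 1| dμ)² ≤ 2 ∫ klFun f dμ`.
-/

open MeasureTheory Real Set InformationTheory

lemma monotoneOn_add_one_mul_log_sub :
    MonotoneOn (fun x : ℝ => (x + 1) * log x - 2 * (x - 1)) (Ioi 0) := by
  have hd : ∀ x ∈ Ioi (0 : ℝ), HasDerivAt (fun x : ℝ => (x + 1) * log x - 2 * (x - 1))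
      (log x + x⁻¹ - 1) x := fun x hx => by
    refine ((((hasDerivAt_id' x).add_const 1).mul (hasDerivAt_log (ne_of_gt hx))).sub
      (((hasDerivAt_id' x).sub_const 1).const_mul 2)).congr_deriv ?_
    rw [add_mul, mul_inv_cancel₀ (ne_of_gt hx)]
    ring
  refine monotoneOn_of_hasDerivWithinAt_nonneg (f' := fun x => log x + x⁻¹ - 1)
    (convex_Ioi 0) (fun x hx => (hd x hx).continuousAt.continuousWithinAt) ?_ ?_ <;>
    rw [interior_Ioi]
  · exact fun x hx => (hd x hx).hasDerivWithinAt
  · exact fun x hx => by linarith [one_sub_inv_le_log_of_pos hx]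

lemma three_mul_sq_sub_one_le_mul_klFun {x : ℝ} (hx : 0 ≤ x) :
    3 * (x - 1) ^ 2 ≤ (2 * x + 4) * klFun x := by
  set φ : ℝ → ℝ := fun x => (2 * x + 4) * klFun x - 3 * (x - 1) ^ 2 with hφ
  set h : ℝ → ℝ := fun x => (x + 1) * log x - 2 * (x - 1)
  -- `φ' = 4 h`, and `h` vanishes at `1` and is monotone, so `φ` is minimal at `1`.
  have hφ' : ∀ y, 0 < y → HasDerivAt φ (4 * h y) y := fun y hy => by
    refine ((((hasDerivAt_id' y).const_mul 2).add_const 4).mul (hasDerivAt_klFun hy.ne')).sub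
      ((((hasDerivAt_id' y).sub_const 1).pow 2).const_mul 3) |>.congr_deriv ?_
    simp only [h, klFun_apply]
    ring
  have hcont : Continuous φ := by fun_prop
  have hφ1 : φ 1 = 0 := by simp [hφ, klFun_one]
  suffices 0 ≤ φ x by simp only [hφ] at this; linarith
  rcases le_total x 1 with hx1 | hx1
  · have hanti : AntitoneOn φ (Icc 0 1) := by
      refine antitoneOn_of_hasDerivWithinAt_nonpos (f' := fun y => 4 * h y) (convex_Icc 0 1)
        hcont.continuousOn ?_ ?_ <;> rw [interior_Icc]
      · exact fun y hy => (hφ' y hy.1).hasDerivWithinAt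
      · intro y hy
        have := monotoneOn_add_one_mul_log_sub hy.1 (mem_Ioi.2 one_pos) hy.2.le
        norm_num at this; linarith
    rw [← hφ1]; exact hanti ⟨hx, hx1⟩ ⟨zero_le_one, le_rfl⟩ hx1
  · have hmono : MonotoneOn φ (Ici 1) := by
      refine monotoneOn_of_hasDerivWithinAt_nonneg (f' := fun y => 4 * h y) (convex_Ici 1)
        hcont.continuousOn ?_ ?_ <;> rw [interior_Ici]
      · exact fun y hy => (hφ' y (one_pos.trans hy)).hasDerivWithinAt
      · intro y hy
        have := monotoneOn_add_one_mul_log_sub (mem_Ioi.2 one_pos)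
          (mem_Ioi.2 (one_pos.trans hy)) hy.le
        norm_num at this; linarith
    rw [← hφ1]; exact hmono self_mem_Ici hx1 hx1

section

variable {α : Type*} [MeasurableSpace α] {μ : Measure α}

lemma two_mul_abs_setIntegral_le_integral_abs {g : α → ℝ} {s : Set α} (hg : Integrable g μ)
    (hg0 : ∫ x, g x ∂μ = 0) (hs : MeasurableSet s) :
    2 * |∫ x in s, g x ∂μ| ≤ ∫ x, |g x| ∂μ := by
  have hcompl : ∫ x in sᶜ, g x ∂μ = -∫ x in s, g x ∂μ := by
    linarith [integral_add_compl hs hg]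
  calc 2 * |∫ x in s, g x ∂μ| = |∫ x in s, g x ∂μ| + |∫ x in sᶜ, g x ∂μ| := by
        rw [hcompl, abs_neg]; ring
    _ ≤ ∫ x in s, |g x| ∂μ + ∫ x in sᶜ, |g x| ∂μ :=
        add_le_add abs_integral_le_integral_abs abs_integral_le_integral_abs
    _ = ∫ x, |g x| ∂μ := integral_add_compl hs hg.abs

lemma memLp_two_sqrt_of_integrable {u : α → ℝ} (hu0 : 0 ≤ u) (hu : Integrable u μ) :
    MemLp (fun x => √(u x)) 2 μ := by
  refine (memLp_two_iff_integrable_sq hu.aemeasurable.sqrt.aestronglyMeasurable).2 ?_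
  simpa only [sq_sqrt (hu0 _)] using hu

lemma sq_integral_le_integral_mul_integral {g w k : α → ℝ} (hg : 0 ≤ g) (hw0 : 0 ≤ w)
    (hk0 : 0 ≤ k) (hw : Integrable w μ) (hk : Integrable k μ)
    (h : ∀ x, g x ^ 2 ≤ w x * k x) :
    (∫ x, g x ∂μ) ^ 2 ≤ (∫ x, w x ∂μ) * ∫ x, k x ∂μ := by
  by_cases hgi : Integrable g μ
  swap
  · rw [integral_undef hgi, sq, zero_mul]
    exact mul_nonneg (integral_nonneg hw0) (integral_nonneg hk0)
  have hW := memLp_two_sqrt_of_integrable hw0 hw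
  have hK := memLp_two_sqrt_of_integrable hk0 hk
  have hle : ∫ x, g x ∂μ ≤ ∫ x, √(w x) * √(k x) ∂μ := by
    refine integral_mono hgi (hW.integrable_mul hK) fun x => ?_
    rw [← sqrt_mul (hw0 x)]
    exact le_sqrt_of_sq_le (h x)
  have holder := integral_mul_le_Lp_mul_Lq_of_nonneg HolderConjugate.two_two
    (.of_forall fun x => sqrt_nonneg (w x)) (.of_forall fun x => sqrt_nonneg (k x))
    (by simpa using hW) (by simpa using hK)
  simp only [rpow_two, sq_sqrt (hw0 _), sq_sqrt (hk0 _), ← sqrt_eq_rpow] at holder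
  calc (∫ x, g x ∂μ) ^ 2 ≤ (√(∫ x, w x ∂μ) * √(∫ x, k x ∂μ)) ^ 2 :=
        pow_le_pow_left₀ (integral_nonneg hg) (hle.trans holder) 2
    _ = (∫ x, w x ∂μ) * ∫ x, k x ∂μ := by
        rw [mul_pow, sq_sqrt (integral_nonneg hw0), sq_sqrt (integral_nonneg hk0)]

lemma sq_integral_abs_sub_one_le_two_mul_integral_klFun [IsProbabilityMeasure μ] {f : α → ℝ}
    (hf0 : ∀ x, 0 ≤ f x) (hf : Integrable f μ) (hf1 : ∫ x, f x ∂μ = 1)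
    (hk : Integrable (fun x => klFun (f x)) μ) :
    (∫ x, |f x - 1| ∂μ) ^ 2 ≤ 2 * ∫ x, klFun (f x) ∂μ := by
  have hw : Integrable (fun x => (2 * f x + 4) / 3) μ :=
    ((hf.const_mul 2).add (integrable_const 4)).div_const 3
  have hw1 : ∫ x, (2 * f x + 4) / 3 ∂μ = 2 := by
    rw [integral_div, integral_add (hf.const_mul 2) (integrable_const 4), integral_const_mul,
      hf1]
    norm_num
  calc (∫ x, |f x - 1| ∂μ) ^ 2
        ≤ (∫ x, (2 * f x + 4) / 3 ∂μ) * ∫ x, klFun (f x) ∂μ :=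
        sq_integral_le_integral_mul_integral (fun x => abs_nonneg _)
          (fun x => by have := hf0 x; positivity) (fun x => klFun_nonneg (hf0 x)) hw hk
          fun x => by nlinarith [sq_abs (f x - 1), three_mul_sq_sub_one_le_mul_klFun (hf0 x)]
    _ = 2 * ∫ x, klFun (f x) ∂μ := by rw [hw1]

end

theorem stmt7 {E : Type*} [MeasurableSpace E]
    (μ ν : Measure E) [IsProbabilityMeasure μ] [IsProbabilityMeasure ν]
    (hac : ν ≪ μ)
    (hint : Integrable (fun x => Real.log ((ν.rnDeriv μ x).toReal)) ν) :
    ∀ A : Set E, MeasurableSet A →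
      2 * |(μ A).toReal - (ν A).toReal| ^ 2 ≤
        ∫ x, Real.log ((ν.rnDeriv μ x).toReal) ∂ν := by
  intro A hA
  set f : E → ℝ := fun x => (ν.rnDeriv μ x).toReal
  have hf : Integrable f μ := Measure.integrable_toReal_rnDeriv
  have hf1 : ∫ x, f x ∂μ = 1 := by simp [f, Measure.integral_toReal_rnDeriv hac]
  have hKL : ∫ x, log (f x) ∂ν = ∫ x, klFun (f x) ∂μ := by
    simp [f, integral_klFun_rnDeriv hac hint, llr]
  have hA' : (ν A).toReal - (μ A).toReal = ∫ x in A, (f x - 1) ∂μ := by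
    rw [integral_sub hf.integrableOn (integrable_const 1).integrableOn,
      Measure.setIntegral_toReal_rnDeriv hac]
    simp [measureReal_def]
  have hTV := two_mul_abs_setIntegral_le_integral_abs (g := fun x => f x - 1)
    (hf.sub (integrable_const 1)) (by rw [integral_sub hf (integrable_const 1), hf1]; simp) hA
  have hPinsker := sq_integral_abs_sub_one_le_two_mul_integral_klFun
    (fun x => ENNReal.toReal_nonneg) hf hf1 ((integrable_klFun_rnDeriv_iff hac).2 hint)
  rw [hKL, abs_sub_comm, hA']
  nlinarith [pow_le_pow_left₀ (by positivity) hTV 2]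
end
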